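/- Let n ≥ 2 be an integer, κ > 0 and C₀ > 0. Let (X, d) be a bounded metric space with diam(X) = D > 0, and let μ be a Borel measure on X with 0 < μ(X) < ∞ satisfying μ(B(x, r)) ≤ κ⁻¹ rⁿ for all x ∈ X and all r > 0. Suppose u : X → ℝ is integrable with average ū = μ(X)⁻¹ ∫_X u dμ, f : X → [0, ∞) is integrable, and |u(x) − ū| ≤ C₀ · ∫_X f(y) / d(x, y)^{n−1} dμ(y) for μ-almost every x ∈ X. Then there exists a constant C > 0, depending only on n, such that ∫_X |u − ū| dμ ≤ C C₀ κ⁻¹ D · ‖f‖₁. -/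

import Mathlib

open MeasureTheory Metric ENNReal

/-- The Riesz potential of order 1 on an `n`-dimensional metric measure space:
`I₁ f (x) = ∫_X f(y) / d(x,y)^{n-1} dμ(y)`. -/
noncomputable def rieszPotential {X : Type*} [MetricSpace X] [MeasurableSpace X]
    (μ : Measure X) (n : ℕ) (f : X → ℝ) (x : X) : ℝ≥0∞ :=
  ∫⁻ y, ENNReal.ofReal (f y) / edist x y ^ (n - 1) ∂μ

/-- The average `μ(X)⁻¹ ∫_X g dμ` of a function. -/
noncomputable def avg {X : Type*} [MeasurableSpace X] (μ : Measure X) (g : X → ℝ) : ℝ :=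
  (μ Set.univ).toReal⁻¹ * ∫ x, g x ∂μ

/-!
Integrating the pointwise bound leaves `∫∫ f(y) d(x,y)^{1-n} dμ(y) dμ(x)` to estimate.
With `ν = f μ`, the dyadic decomposition `d(x,y)^{1-n} ≤ ∑ₖ (D/2^{k+1})^{1-n} 1[d(x,y) < 2D/2ᵏ]`
bounds it by `∑ₖ (D/2^{k+1})^{1-n} ∫ ν(B(x, 2D/2ᵏ)) dμ(x)`. A covering argument exchanges the
roles of `μ` and `ν` at the cost of a factor 5 in the radius, and then `μ(B(y, r)) ≤ κ⁻¹ rⁿ`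
makes the `k`-th term `≤ 10ⁿ 2^{n-1} κ⁻¹ D 2⁻ᵏ ν(X)`: a geometric series summing to
`20ⁿ κ⁻¹ D ‖f‖₁`.
-/

open Set Filter Topology

section Covering

variable {X : Type*} [PseudoMetricSpace X] [MeasurableSpace X]

theorem lowerSemicontinuous_measure_ball (ν : Measure X) (r : ℝ) :
    LowerSemicontinuous fun x => ν (ball x r) := by
  intro x c (hc : c < ν (ball x r))
  have hmono : Monotone fun k : ℕ => ball x (r - 1 / (k + 1)) := fun i j hij =>
    ball_subset_ball (by gcongr)
  have hunion : ⋃ k : ℕ, ball x (r - 1 / (k + 1)) = ball x r := by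
    refine Subset.antisymm (iUnion_subset fun k => ball_subset_ball ?_) fun y hy => ?_
    · linarith [Nat.one_div_pos_of_nat (α := ℝ) (n := k)]
    · obtain ⟨k, hk⟩ := exists_nat_one_div_lt (sub_pos.2 (mem_ball.1 hy))
      exact mem_iUnion.2 ⟨k, mem_ball.2 (by linarith)⟩
  rw [← hunion, hmono.measure_iUnion] at hc
  obtain ⟨k, hk⟩ := lt_iSup_iff.1 hc
  filter_upwards [ball_mem_nhds x (Nat.one_div_pos_of_nat (α := ℝ) (n := k))] with x' hx'
  refine hk.trans_le (measure_mono (ball_subset_ball' ?_))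
  rw [mem_ball'] at hx'
  linarith

theorem measure_singleton_eq_zero_of_measure_ball_le {μ : Measure X} {C : ℝ} {n : ℕ} (hn : n ≠ 0)
    (hball : ∀ (x : X) (r : ℝ), 0 < r → μ (ball x r) ≤ ENNReal.ofReal (C * r ^ n)) (x : X) :
    μ {x} = 0 := by
  have hlim : Tendsto (fun r : ℝ => ENNReal.ofReal (C * r ^ n)) (𝓝[>] 0) (𝓝 0) := by
    have : Tendsto (fun r : ℝ => C * r ^ n) (𝓝 0) (𝓝 0) := by
      simpa [hn] using ((continuous_pow n).tendsto (0 : ℝ)).const_mul C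
    simpa using (ENNReal.tendsto_ofReal this).mono_left nhdsWithin_le_nhds
  refine le_antisymm (ge_of_tendsto hlim (eventually_nhdsWithin_of_forall fun r hr => ?_)) zero_le
  exact (measure_mono (singleton_subset_iff.2 (mem_ball_self hr))).trans (hball x r hr)

/-- The centres form a maximal `2r`-separated subset of `{x | 0 < ν (ball x r)}`: their `r`-balls
are disjoint and of positive measure, so there are countably many. -/
theorem exists_seq_measure_ball_pos_subset_iUnion_closedBall [Nonempty X] (ν : Measure X)
    [SFinite ν] [OpensMeasurableSpace X] {r : ℝ} (hr : 0 < r) :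
    ∃ e : ℕ → X, {x | 0 < ν (ball x r)} ⊆ ⋃ i, closedBall (e i) (2 * r) := by
  set P := {x | 0 < ν (ball x r)}
  set ε : NNReal := ⟨2 * r, by positivity⟩
  obtain ⟨Z, hZ⟩ := zorn_subset {N | N ⊆ P ∧ IsSeparated ε N} fun c hcS hc =>
    ⟨⋃₀ c, ⟨sUnion_subset fun N hN => (hcS hN).1,
      hc.pairwise_sUnion.2 fun N hN => (hcS hN).2⟩, fun N hN => subset_sUnion_of_mem hN⟩
  have hcover := (IsCover.of_maximal_isSeparated hZ).subset_iUnion_closedBall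
  have hdisj : Pairwise (Function.onFun Disjoint fun z : Z => ball (z : X) r) := by
    rintro ⟨z, hz⟩ ⟨w, hw⟩ hzw
    refine disjoint_left.2 fun y hyz hyw => ?_
    have hsep : (ε : ℝ≥0∞) < edist z w := hZ.1.2 hz hw fun h => hzw (Subtype.ext h)
    rw [edist_dist, ← ENNReal.ofReal_coe_nnreal,
      ENNReal.ofReal_lt_ofReal_iff_of_nonneg ε.coe_nonneg] at hsep
    change 2 * r < dist z w at hsep
    linarith [dist_triangle_right z w y, mem_ball'.1 hyz, mem_ball'.1 hyw]
  have hZc : Z.Countable := by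
    have := ν.countable_meas_pos_of_disjoint_iUnion (fun _ => measurableSet_ball) hdisj
    rw [show {z : Z | 0 < ν (ball (z : X) r)} = univ from eq_univ_of_forall fun z => hZ.1.1 z.2,
      countable_univ_iff] at this
    exact countable_coe_iff.1 this
  obtain ⟨e, he⟩ := (hZc.insert (Classical.arbitrary X)).exists_eq_range (insert_nonempty _ _)
  refine ⟨e, hcover.trans (iUnion₂_subset fun z hz => ?_)⟩
  obtain ⟨i, rfl⟩ : z ∈ range e := he ▸ mem_insert_of_mem _ hz
  exact subset_iUnion_of_subset i subset_rfl

end Covering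

section Swap

variable {X : Type*} [PseudoMetricSpace X] [MeasurableSpace X] [OpensMeasurableSpace X]

/-- A substitute for Tonelli applied to `1[d(x, y) < r]`, which need not be measurable for the
product σ-algebra when `X` is not separable. -/
theorem lintegral_measure_ball_le_lintegral_measure_ball_five_mul (μ ν : Measure X) [SFinite ν]
    {r : ℝ} (hr : 0 < r) :
    ∫⁻ x, ν (ball x r) ∂μ ≤ ∫⁻ y, μ (ball y (5 * r)) ∂ν := by
  cases isEmpty_or_nonempty X
  · simp [lintegral_of_isEmpty]
  obtain ⟨e, he⟩ := exists_seq_measure_ball_pos_subset_iUnion_closedBall ν hr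
  set W := disjointed fun i => closedBall (e i) (2 * r)
  have hWm : ∀ i, MeasurableSet (W i) := .disjointed fun _ => measurableSet_closedBall
  have hWd : Pairwise (Function.onFun Disjoint W) := disjoint_disjointed _
  have hWsub (i : ℕ) {x : X} (hx : x ∈ W i) : dist x (e i) ≤ 2 * r :=
    mem_closedBall.1 (disjointed_subset _ i hx)
  have hfiber (y : X) :
      ∑' i, (ball (e i) (3 * r)).indicator (fun _ => μ (W i)) y ≤ μ (ball y (5 * r)) :=
    calc ∑' i, (ball (e i) (3 * r)).indicator (fun _ => μ (W i)) y
        ≤ ∑' i, μ (W i ∩ ball y (5 * r)) := ENNReal.tsum_le_tsum fun i => by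
          by_cases hy : y ∈ ball (e i) (3 * r)
          · rw [indicator_of_mem hy]
            refine measure_mono fun x hx => ⟨hx, mem_ball.2 ?_⟩
            linarith [hWsub i hx, mem_ball'.1 hy, dist_triangle x (e i) y]
          · rw [indicator_of_notMem hy]
            exact zero_le
      _ ≤ μ (⋃ i, W i ∩ ball y (5 * r)) :=
          tsum_meas_le_meas_iUnion_of_disjoint μ (fun i => (hWm i).inter measurableSet_ball)
            (hWd.mono fun _ _ h => h.mono inter_subset_left inter_subset_left)
      _ ≤ μ (ball y (5 * r)) := measure_mono (iUnion_subset fun _ => inter_subset_right)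
  calc ∫⁻ x, ν (ball x r) ∂μ
      = ∫⁻ x in ⋃ i, W i, ν (ball x r) ∂μ := by
        refine (setLIntegral_eq_of_support_subset fun x hx => ?_).symm
        rw [iUnion_disjointed]
        exact he (pos_iff_ne_zero.2 hx)
    _ = ∑' i, ∫⁻ x in W i, ν (ball x r) ∂μ := lintegral_iUnion hWm hWd _
    _ ≤ ∑' i, ∫⁻ _ in W i, ν (ball (e i) (3 * r)) ∂μ := ENNReal.tsum_le_tsum fun i =>
        setLIntegral_mono' (hWm i) fun x hx =>
          measure_mono (ball_subset_ball' (by linarith [hWsub i hx]))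
    _ = ∑' i, ∫⁻ y, (ball (e i) (3 * r)).indicator (fun _ => μ (W i)) y ∂ν := by
        simp only [setLIntegral_const, lintegral_indicator_const measurableSet_ball, mul_comm]
    _ = ∫⁻ y, ∑' i, (ball (e i) (3 * r)).indicator (fun _ => μ (W i)) y ∂ν :=
        (lintegral_tsum fun _ => (measurable_const.indicator measurableSet_ball).aemeasurable).symm
    _ ≤ ∫⁻ y, μ (ball y (5 * r)) ∂ν := lintegral_mono hfiber

end Swap

section RieszKernel

variable {X : Type*} [MetricSpace X]

/-- The term that does it is the `k` with `D / 2^(k+1) < d(x, y) ≤ D / 2^k`. -/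
theorem inv_edist_pow_le_tsum_indicator_ball {x y : X} {D : ℝ} (hxy : x ≠ y)
    (hD : dist x y ≤ D) (p : ℕ) :
    (edist x y ^ p)⁻¹ ≤ ∑' k : ℕ,
      (ball x (2 * (D / 2 ^ k))).indicator (fun _ => (ENNReal.ofReal (D / 2 ^ k / 2) ^ p)⁻¹) y := by
  have ht : 0 < dist x y := dist_pos.2 hxy
  obtain ⟨k, hk, hk'⟩ := exists_nat_pow_near ((one_le_div ht).2 hD) one_lt_two
  have hle : dist x y ≤ D / 2 ^ k := by
    rw [le_div_iff₀ (by positivity), mul_comm]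
    rwa [le_div_iff₀ ht] at hk
  have hlt : D / 2 ^ k / 2 < dist x y := by
    rw [div_div, ← pow_succ, div_lt_iff₀ (by positivity), mul_comm]
    rwa [div_lt_iff₀ ht] at hk'
  refine le_trans ?_ (ENNReal.le_tsum k)
  rw [indicator_of_mem (mem_ball'.2 (by linarith))]
  gcongr
  rw [edist_dist]
  exact ENNReal.ofReal_le_ofReal hlt.le

theorem lintegral_inv_edist_pow_le_tsum [MeasurableSpace X] [OpensMeasurableSpace X]
    (ν : Measure X) {x : X} (hx : ν {x} = 0) {D : ℝ} (hD : ∀ y, dist x y ≤ D) (p : ℕ) :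
    ∫⁻ y, (edist x y ^ p)⁻¹ ∂ν ≤
      ∑' k : ℕ, (ENNReal.ofReal (D / 2 ^ k / 2) ^ p)⁻¹ * ν (ball x (2 * (D / 2 ^ k))) := by
  calc ∫⁻ y, (edist x y ^ p)⁻¹ ∂ν
      ≤ ∫⁻ y, ∑' k : ℕ, (ball x (2 * (D / 2 ^ k))).indicator
          (fun _ => (ENNReal.ofReal (D / 2 ^ k / 2) ^ p)⁻¹) y ∂ν := by
        refine lintegral_mono_ae ?_
        filter_upwards [compl_mem_ae_iff.2 hx] with y hy
        exact inv_edist_pow_le_tsum_indicator_ball (Ne.symm hy) (hD y) p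
    _ = _ := by
        rw [lintegral_tsum fun _ => (measurable_const.indicator measurableSet_ball).aemeasurable]
        simp_rw [lintegral_indicator_const measurableSet_ball]

theorem tsum_ofReal_div_two_pow (A : ℝ) :
    ∑' k : ℕ, ENNReal.ofReal (A / 2 ^ k) = ENNReal.ofReal (2 * A) := by
  have hterm (k : ℕ) : ENNReal.ofReal (A / 2 ^ k) = ENNReal.ofReal A * 2⁻¹ ^ k := by
    rw [div_eq_mul_inv, ← inv_pow, ENNReal.ofReal_mul' (by positivity),
      ENNReal.ofReal_pow (by norm_num), ENNReal.ofReal_inv_of_pos two_pos, ENNReal.ofReal_ofNat]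
  rw [tsum_congr hterm, ENNReal.tsum_mul_left, ENNReal.tsum_geometric, ENNReal.one_sub_inv_two,
    inv_inv, ENNReal.ofReal_mul zero_le_two, ENNReal.ofReal_ofNat, mul_comm]

theorem lintegral_lintegral_inv_edist_pow_le [MeasurableSpace X] [OpensMeasurableSpace X]
    (μ ν : Measure X) [SFinite ν] {C D : ℝ} (hD : 0 < D) (hdiam : ∀ x y : X, dist x y ≤ D) (p : ℕ)
    (hball : ∀ (x : X) (r : ℝ), 0 < r → μ (ball x r) ≤ ENNReal.ofReal (C * r ^ (p + 1)))
    (hν : ∀ x, ν {x} = 0) :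
    ∫⁻ x, ∫⁻ y, (edist x y ^ p)⁻¹ ∂ν ∂μ ≤ ENNReal.ofReal (20 ^ (p + 1) * C * D) * ν univ := by
  set c : ℕ → ℝ≥0∞ := fun k => (ENNReal.ofReal (D / 2 ^ k / 2) ^ p)⁻¹
  have hc (k : ℕ) : c k = ENNReal.ofReal (((D / 2 ^ k / 2) ^ p)⁻¹) := by
    rw [ENNReal.ofReal_inv_of_pos (by positivity), ENNReal.ofReal_pow (by positivity)]
  have hterm (k : ℕ) : c k * ENNReal.ofReal (C * (5 * (2 * (D / 2 ^ k))) ^ (p + 1)) =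
      ENNReal.ofReal (10 ^ (p + 1) * 2 ^ p * C * D / 2 ^ k) := by
    rw [hc, ← ENNReal.ofReal_mul (by positivity), mul_div_assoc]
    congr 1
    rw [div_pow _ 2, inv_div, pow_succ, pow_succ (10 : ℝ)]
    field_simp
    ring
  calc ∫⁻ x, ∫⁻ y, (edist x y ^ p)⁻¹ ∂ν ∂μ
      ≤ ∫⁻ x, ∑' k, c k * ν (ball x (2 * (D / 2 ^ k))) ∂μ :=
        lintegral_mono fun x => lintegral_inv_edist_pow_le_tsum ν (hν x) (hdiam x) p
    _ = ∑' k, c k * ∫⁻ x, ν (ball x (2 * (D / 2 ^ k))) ∂μ := by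
        rw [lintegral_tsum fun k =>
          ((lowerSemicontinuous_measure_ball ν _).measurable.const_mul _).aemeasurable]
        simp_rw [hc, lintegral_const_mul' _ _ ENNReal.ofReal_ne_top]
    _ ≤ ∑' k, c k * ∫⁻ y, μ (ball y (5 * (2 * (D / 2 ^ k)))) ∂ν :=
        ENNReal.tsum_le_tsum fun k => mul_le_mul_right
          (lintegral_measure_ball_le_lintegral_measure_ball_five_mul μ ν (by positivity)) _
    _ ≤ ∑' k, c k * (ENNReal.ofReal (C * (5 * (2 * (D / 2 ^ k))) ^ (p + 1)) * ν univ) :=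
        ENNReal.tsum_le_tsum fun k => mul_le_mul_right
          ((lintegral_mono fun y => hball y _ (by positivity)).trans_eq (lintegral_const _)) _
    _ = ∑' k, ENNReal.ofReal (10 ^ (p + 1) * 2 ^ p * C * D / 2 ^ k) * ν univ :=
        tsum_congr fun k => by rw [← mul_assoc, hterm]
    _ = ENNReal.ofReal (20 ^ (p + 1) * C * D) * ν univ := by
        rw [ENNReal.tsum_mul_right, tsum_ofReal_div_two_pow]
        congr 2
        rw [show (20 : ℝ) = 2 * 10 by norm_num, mul_pow]
        ring

end RieszKernel

theorem lintegral_rieszPotential_le {X : Type*} [MetricSpace X] [MeasurableSpace X]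
    [OpensMeasurableSpace X] (μ : Measure X) {C D : ℝ} (hD : 0 < D)
    (hdiam : ∀ x y : X, dist x y ≤ D) (p : ℕ)
    (hball : ∀ (x : X) (r : ℝ), 0 < r → μ (ball x r) ≤ ENNReal.ofReal (C * r ^ (p + 1)))
    {f : X → ℝ} (hf : Integrable f μ) (hf0 : 0 ≤ᵐ[μ] f) :
    ∫⁻ x, rieszPotential μ (p + 1) f x ∂μ ≤
      ENNReal.ofReal (20 ^ (p + 1) * C * D) * ENNReal.ofReal (∫ y, f y ∂μ) := by
  set ν := μ.withDensity fun y => ENNReal.ofReal (f y)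
  have : IsFiniteMeasure ν := isFiniteMeasure_withDensity_ofReal hf.2
  have hpot (x : X) : rieszPotential μ (p + 1) f x = ∫⁻ y, (edist x y ^ p)⁻¹ ∂ν := by
    have hg : Measurable fun y => (edist x y ^ p)⁻¹ :=
      ((continuous_const.edist continuous_id).measurable.pow_const p).inv
    rw [lintegral_withDensity_eq_lintegral_mul₀ hf.1.aemeasurable.ennreal_ofReal hg.aemeasurable]
    simp [rieszPotential, div_eq_mul_inv]
  have hνuniv : ν univ = ENNReal.ofReal (∫ y, f y ∂μ) := by
    rw [withDensity_apply _ MeasurableSet.univ, setLIntegral_univ,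
      ofReal_integral_eq_lintegral_ofReal hf hf0]
  simp_rw [hpot, ← hνuniv]
  exact lintegral_lintegral_inv_edist_pow_le μ ν hD hdiam p hball fun x =>
    withDensity_absolutelyContinuous μ _
      (measure_singleton_eq_zero_of_measure_ball_le p.succ_ne_zero hball x)

/-- the `L¹` Poincaré-type inequality. On a bounded metric space of positive
diameter `D` with a finite Borel measure satisfying `μ(B(x,r)) ≤ κ⁻¹ rⁿ`, if an integrable
`u` with average `ū` satisfies `|u − ū| ≤ C₀ I₁ f` a.e. for some integrable `f ≥ 0`, then
`∫ |u − ū| dμ ≤ C C₀ κ⁻¹ D ‖f‖₁`, with `C` depending only on `n`. -/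
theorem L1_poincare_of_riesz_bound (n : ℕ) (hn : 2 ≤ n) :
    ∃ C : ℝ, 0 < C ∧
      ∀ (X : Type*) [MetricSpace X] [MeasurableSpace X] [BorelSpace X] (κ C₀ : ℝ),
        0 < κ → 0 < C₀ →
        Bornology.IsBounded (Set.univ : Set X) →
        0 < diam (Set.univ : Set X) →
        ∀ μ : Measure X, 0 < μ Set.univ → μ Set.univ < ⊤ →
          (∀ (x : X) (r : ℝ), 0 < r → μ (ball x r) ≤ ENNReal.ofReal (κ⁻¹ * r ^ n)) →
          ∀ u f : X → ℝ, Integrable u μ → Integrable f μ → (∀ y, 0 ≤ f y) →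
            (∀ᵐ x ∂μ,
              ENNReal.ofReal |u x - avg μ u| ≤
                ENNReal.ofReal C₀ * rieszPotential μ n f x) →
            (∫ x, |u x - avg μ u| ∂μ) ≤
              C * C₀ * κ⁻¹ * diam (Set.univ : Set X) * ∫ y, f y ∂μ := by
  refine ⟨20 ^ n, by positivity, ?_⟩
  intro X _ _ _ κ C₀ hκ hC₀ hbdd hD μ _ hμfin hball u f hu hf hf0 hae
  obtain ⟨p, rfl⟩ : ∃ p, n = p + 1 := ⟨n - 1, by omega⟩
  have : IsFiniteMeasure μ := ⟨hμfin⟩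
  have hdiam (x y : X) : dist x y ≤ diam univ := dist_le_diam_of_mem hbdd trivial trivial
  have hlint : ∫⁻ x, ENNReal.ofReal |u x - avg μ u| ∂μ ≤ ENNReal.ofReal C₀ *
      (ENNReal.ofReal (20 ^ (p + 1) * κ⁻¹ * diam univ) * ENNReal.ofReal (∫ y, f y ∂μ)) :=
    calc ∫⁻ x, ENNReal.ofReal |u x - avg μ u| ∂μ
        ≤ ∫⁻ x, ENNReal.ofReal C₀ * rieszPotential μ (p + 1) f x ∂μ := lintegral_mono_ae hae
      _ = ENNReal.ofReal C₀ * ∫⁻ x, rieszPotential μ (p + 1) f x ∂μ :=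
          lintegral_const_mul' _ _ ENNReal.ofReal_ne_top
      _ ≤ _ := mul_le_mul_right
          (lintegral_rieszPotential_le μ hD hdiam p hball hf (.of_forall hf0)) _
  have hint : Integrable (fun x => |u x - avg μ u|) μ := (hu.sub (integrable_const _)).abs
  have hfint : 0 ≤ ∫ y, f y ∂μ := integral_nonneg hf0
  rw [← ENNReal.ofReal_le_ofReal_iff (by positivity),
    ofReal_integral_eq_lintegral_ofReal hint (.of_forall fun x => abs_nonneg _)]
  convert hlint using 1
  rw [← ENNReal.ofReal_mul (by positivity), ← ENNReal.ofReal_mul hC₀.le]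
  congr 1
  ring
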